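/- The set 𝒢₁ = { x_a x_b : a < b } ∪ { Σ_a x_a² − 1 } ∪ { x_a³ − x_a : a > (1,...,1) } is a reduced Gröbner basis, with respect to grevlex, of the ideal I₁ = ⟨ x_a³ − x_a, x_a x_b (a ≠ b), Σ_a x_a² − 1 ⟩ in ℝ[x_a : a ∈ [𝐧]]. -/

import Mathlib

open MvPolynomial

/-- Multi-index set `[n₁] × ⋯ × [n_d]`. -/
abbrev Idx {d : ℕ} (n : Fin d → ℕ) : Type := ∀ i, Fin (n i)

/-- Componentwise minimum of multi-indices. -/
def amin {d : ℕ} {n : Fin d → ℕ} (a b : Idx n) : Idx n := fun i => min (a i) (b i)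

/-- Componentwise maximum of multi-indices. -/
def amax {d : ℕ} {n : Fin d → ℕ} (a b : Idx n) : Idx n := fun i => max (a i) (b i)

/-- Lexicographic order on multi-indices: `a < b` iff at the first position where they
differ, `a` is smaller.  (With this convention the variable `x_a` is *larger* in the
variable order `x_{1⋯1} > x_{1⋯2} > ⋯ > x_{n₁⋯n_d}` exactly when `a` is lexicographically
smaller.) -/
def idxLt {d : ℕ} {n : Fin d → ℕ} (a b : Idx n) : Prop :=
  ∃ i, a i < b i ∧ ∀ j, j < i → a j = b j

/-- Total degree of an exponent vector. -/
def expDeg {σ : Type*} (α : σ →₀ ℕ) : ℕ := α.sum fun _ k => k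

/-- The graded reverse lexicographic order on exponent vectors (viewing the variable
`x_a` with lexicographically smaller index `a` as the larger variable): `α < β` iff
`deg α < deg β`, or the degrees agree and at the largest (in the variable order, i.e.
lexicographically largest) index where they differ, `α` has the *larger* exponent. -/
def grevlexLt {d : ℕ} {n : Fin d → ℕ} (α β : Idx n →₀ ℕ) : Prop :=
  expDeg α < expDeg β ∨
    (expDeg α = expDeg β ∧ ∃ j, β j < α j ∧ ∀ k, idxLt j k → α k = β k)

/-- `m` is the leading monomial (w.r.t. grevlex) of the polynomial `f`. -/
def IsLeadMon {d : ℕ} {n : Fin d → ℕ} (f : MvPolynomial (Idx n) ℝ)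
    (m : Idx n →₀ ℕ) : Prop :=
  m ∈ f.support ∧ ∀ m' ∈ f.support, m' ≠ m → grevlexLt m' m

/-- `G` is a Gröbner basis of the ideal `I` w.r.t. grevlex: `G` generates `I` and the
leading monomial of every nonzero element of `I` is divisible by the leading monomial of
some element of `G`. -/
def IsGroebnerBasis {d : ℕ} {n : Fin d → ℕ} (G : Set (MvPolynomial (Idx n) ℝ))
    (I : Ideal (MvPolynomial (Idx n) ℝ)) : Prop :=
  Ideal.span G = I ∧
    ∀ f ∈ I, f ≠ 0 → ∀ m, IsLeadMon f m →
      ∃ g ∈ G, ∃ mg, IsLeadMon g mg ∧ mg ≤ m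

/-- `G` is a *reduced* Gröbner basis of `I`: it is a Gröbner basis, every element is monic,
and no monomial of an element of `G` is divisible by the leading monomial of another
element of `G`. -/
def IsReducedGroebnerBasis {d : ℕ} {n : Fin d → ℕ} (G : Set (MvPolynomial (Idx n) ℝ))
    (I : Ideal (MvPolynomial (Idx n) ℝ)) : Prop :=
  IsGroebnerBasis G I ∧
    ∀ g ∈ G, (∀ m, IsLeadMon g m → coeff m g = 1) ∧
      ∀ m ∈ g.support, ∀ g' ∈ G, g' ≠ g → ∀ m', IsLeadMon g' m' → ¬ m' ≤ m

/-- The set of rank-1 binomials `x_a x_b − x_{a∧b} x_{a∨b}`. -/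
noncomputable def rk1Binomials {d : ℕ} (n : Fin d → ℕ) : Set (MvPolynomial (Idx n) ℝ) :=
  {f | ∃ a b : Idx n, f = X a * X b - X (amin a b) * X (amax a b)}

/-- The ideal `I₀` generated by all rank-1 binomials. -/
noncomputable def I0 {d : ℕ} (n : Fin d → ℕ) : Ideal (MvPolynomial (Idx n) ℝ) :=
  Ideal.span (rk1Binomials n)

/-- The reduced Gröbner basis `𝒢₀` of `I₀`. -/
noncomputable def G0 {d : ℕ} (n : Fin d → ℕ) : Set (MvPolynomial (Idx n) ℝ) :=
  {f | ∃ a b : Idx n, idxLt a b ∧ (∃ i, b i < a i) ∧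
    f = X a * X b - X (amin a b) * X (amax a b)}

variable {d : ℕ} (n : Fin d → ℕ) [∀ i, NeZero (n i)]

/-- The smallest multi-index `(1,…,1)`. -/
def botIdx {d : ℕ} (n : Fin d → ℕ) [∀ i, NeZero (n i)] : Idx n := fun i => (0 : Fin (n i))

/-- The ideal `I₁ = ⟨x_a³ − x_a, x_a x_b (a ≠ b), Σ_a x_a² − 1⟩`. -/
noncomputable def I1 {d : ℕ} (n : Fin d → ℕ) : Ideal (MvPolynomial (Idx n) ℝ) :=
  Ideal.span ({f | ∃ a : Idx n, f = X a ^ 3 - X a} ∪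
    {f | ∃ a b : Idx n, a ≠ b ∧ f = X a * X b} ∪
    {(∑ a : Idx n, X a ^ 2) - 1})

/-- `𝒢₁ = {x_a x_b : a < b} ∪ {Σ_a x_a² − 1} ∪ {x_a³ − x_a : a > (1,…,1)}`. -/
noncomputable def G1 {d : ℕ} (n : Fin d → ℕ) [∀ i, NeZero (n i)] :
    Set (MvPolynomial (Idx n) ℝ) :=
  {f | ∃ a b : Idx n, idxLt a b ∧ f = X a * X b} ∪
    {(∑ a : Idx n, X a ^ 2) - 1} ∪
    {f | ∃ a : Idx n, idxLt (botIdx n) a ∧ f = X a ^ 3 - X a}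

/-!
The leading monomials of `𝒢₁` are `x_a x_b` (`a < b`), `x_{1⋯1}²` and `x_a³` (`a > 1⋯1`), so the
standard monomials are `1`, `x_a` and `x_a²` (`a ≠ 1⋯1`). If `f ∈ I₁` had a standard leading
monomial, then `f` would have degree at most `2` and, as `x_{1⋯1}²` is grevlex-larger than every
`x_a²`, no `x_{1⋯1}²` term. At the points `±e_a` of the variety of `I₁` only the monomials `1`,
`x_a`, `x_a²` of such an `f` survive, and `f(e_a) = f(-e_a) = 0` for all `a` forces all its
standard coefficients to vanish. That `𝒢₁` generates `I₁` comes down to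
`x_{1⋯1}³ - x_{1⋯1} = x_{1⋯1} (Σ_a x_a² - 1) - Σ_{a ≠ 1⋯1} (x_{1⋯1} x_a) x_a`.
-/

namespace Finsupp

variable {σ : Type*}

theorem eq_of_le_of_degree_le {m m' : σ →₀ ℕ} (h : m ≤ m') (hdeg : m'.degree ≤ m.degree) :
    m = m' := by
  obtain ⟨c, rfl⟩ := exists_add_of_le h
  simp only [map_add] at hdeg
  rw [(degree_eq_zero_iff c).1 (by omega), add_zero]

theorem single_add_single_le {a b : σ} (hab : a ≠ b) {m : σ →₀ ℕ} (ha : m a ≠ 0)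
    (hb : m b ≠ 0) : single a 1 + single b 1 ≤ m := by
  intro c
  rw [add_apply]
  rcases eq_or_ne c a with rfl | hca
  · rw [single_eq_same, single_eq_of_ne hab]; omega
  · rw [single_eq_of_ne hca, zero_add]
    rcases eq_or_ne c b with rfl | hcb
    · rw [single_eq_same]; omega
    · rw [single_eq_of_ne hcb]; exact Nat.zero_le _

theorem single_add_single_apply_le_one {a b : σ} (hab : a ≠ b) (c : σ) :
    (single a 1 + single b 1 : σ →₀ ℕ) c ≤ 1 := by
  rw [add_apply]
  rcases eq_or_ne c a with rfl | hca
  · rw [single_eq_same, single_eq_of_ne hab]; rfl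
  · rw [single_eq_of_ne hca, zero_add]
    rcases eq_or_ne c b with rfl | hcb
    · rw [single_eq_same]
    · rw [single_eq_of_ne hcb]; exact zero_le_one

theorem not_single_add_single_le_single {a b : σ} (hab : a ≠ b) (c : σ) (k : ℕ) :
    ¬ single a 1 + single b 1 ≤ single c k := by
  intro h
  have ha : single c k a ≠ 0 := by
    have := h a; rw [add_apply, single_eq_same] at this; omega
  have hb : single c k b ≠ 0 := by
    have := h b; rw [add_apply, single_eq_same] at this; omega
  exact hab ((single_apply_ne_zero.1 ha).1.trans (single_apply_ne_zero.1 hb).1.symm)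

end Finsupp

namespace MvPolynomial

open Finsupp

section EvalPiSingle

variable {σ R : Type*} [CommSemiring R] [DecidableEq σ]

theorem eval_piSingle_monomial (a : σ) (r : R) (m : σ →₀ ℕ) (c : R) :
    eval (Pi.single a r) (monomial m c) = if m = single a (m a) then c * r ^ m a else 0 := by
  rw [eval_monomial]
  split_ifs with hm
  · conv_lhs => rw [hm]
    rw [prod_single_index (by simp), Pi.single_eq_same]
  · obtain ⟨i, hia, hi⟩ : ∃ i ≠ a, m i ≠ 0 := by
      by_contra! h
      exact hm (by ext j; by_cases hj : j = a <;> simp [hj, h])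
    rw [Finsupp.prod, Finset.prod_eq_zero (Finsupp.mem_support_iff.2 hi) (by simp [hia, hi]),
      mul_zero]

theorem eval_piSingle_monomial_of_degree_le_two {m : σ →₀ ℕ} (hm : m.degree ≤ 2) (a : σ)
    (r c : R) :
    eval (Pi.single a r) (monomial m c) = coeff 0 (monomial m c) +
      coeff (single a 1) (monomial m c) * r + coeff (single a 2) (monomial m c) * r ^ 2 := by
  simp only [coeff_monomial, eval_piSingle_monomial]
  by_cases hma : m = single a (m a)
  · have hk : m a ≤ 2 := (le_degree a m).trans hm
    rw [if_pos hma]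
    generalize m a = k at hma hk
    subst hma
    interval_cases k <;> simp [(single_injective a).eq_iff, eq_comm (a := (0 : σ →₀ ℕ))]
  · have hne (k : ℕ) : m ≠ single a k := fun h => hma (by rw [h, single_eq_same])
    simp [hma, hne 1, hne 2, by simpa using hne 0]

theorem eval_piSingle_of_totalDegree_le_two {f : MvPolynomial σ R} (hf : f.totalDegree ≤ 2)
    (a : σ) (r : R) :
    eval (Pi.single a r) f =
      coeff 0 f + coeff (single a 1) f * r + coeff (single a 2) f * r ^ 2 := by
  conv_lhs => rw [f.as_sum]
  conv_rhs => rw [f.as_sum]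
  simp only [map_sum, coeff_sum, Finset.sum_mul, ← Finset.sum_add_distrib]
  exact Finset.sum_congr rfl fun m hm =>
    eval_piSingle_monomial_of_degree_le_two ((le_totalDegree hm).trans hf) a r _

end EvalPiSingle

theorem X_pow_three_sub_X_eq {σ R : Type*} [Fintype σ] [DecidableEq σ] [CommRing R] (c : σ) :
    (X c ^ 3 - X c : MvPolynomial σ R) =
      X c * ((∑ a, X a ^ 2) - 1) - ∑ a ∈ Finset.univ.erase c, X c * X a * X a := by
  rw [← Finset.add_sum_erase _ _ (Finset.mem_univ c), mul_sub, mul_add, Finset.mul_sum]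
  simp only [mul_assoc, ← sq]
  ring

end MvPolynomial

section IdxOrder

variable {d : ℕ} {n : Fin d → ℕ}

theorem idxLt_iff_toLex_lt {a b : Idx n} : idxLt a b ↔ toLex a < toLex b :=
  exists_congr fun _ => and_comm

theorem idxLt_irrefl (a : Idx n) : ¬ idxLt a a := by
  rw [idxLt_iff_toLex_lt]; exact lt_irrefl _

theorem ne_of_idxLt {a b : Idx n} (h : idxLt a b) : a ≠ b := by
  rintro rfl; exact idxLt_irrefl a h

theorem idxLt_or_idxLt_of_ne {a b : Idx n} (h : a ≠ b) : idxLt a b ∨ idxLt b a := by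
  simp only [idxLt_iff_toLex_lt]; exact lt_or_gt_of_ne (toLex_inj.not.2 h)

variable [∀ i, NeZero (n i)]

theorem not_idxLt_botIdx (a : Idx n) : ¬ idxLt a (botIdx n) := by
  rintro ⟨i, hi, -⟩
  exact Fin.not_lt_zero _ hi

theorem idxLt_botIdx_iff {a : Idx n} : idxLt (botIdx n) a ↔ a ≠ botIdx n :=
  ⟨fun h => (ne_of_idxLt h).symm,
    fun h => (idxLt_or_idxLt_of_ne h.symm).resolve_right (not_idxLt_botIdx a)⟩

end IdxOrder

section Grevlex

open Finsupp

variable {d : ℕ} {n : Fin d → ℕ}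

theorem expDeg_eq_degree {σ : Type*} (α : σ →₀ ℕ) : expDeg α = α.degree := rfl

theorem grevlexLt_asymm {α β : Idx n →₀ ℕ} (h : grevlexLt α β) : ¬ grevlexLt β α := by
  rintro (h' | ⟨hd', j', hj', hj'_eq⟩) <;> rcases h with h | ⟨hd, j, hj, hj_eq⟩
  · omega
  · omega
  · omega
  · rcases eq_or_ne j j' with rfl | hne
    · omega
    · rcases idxLt_or_idxLt_of_ne hne with hlt | hlt
      · have := hj_eq j' hlt; omega
      · have := hj'_eq j hlt; omega

theorem IsLeadMon.unique {f : MvPolynomial (Idx n) ℝ} {m m' : Idx n →₀ ℕ}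
    (h : IsLeadMon f m) (h' : IsLeadMon f m') : m = m' := by
  by_contra hne
  exact grevlexLt_asymm (h'.2 m h.1 hne) (h.2 m' h'.1 (Ne.symm hne))

theorem IsLeadMon.expDeg_le {f : MvPolynomial (Idx n) ℝ} {m m' : Idx n →₀ ℕ}
    (h : IsLeadMon f m) (hm' : m' ∈ f.support) : expDeg m' ≤ expDeg m := by
  rcases eq_or_ne m' m with rfl | hne
  · rfl
  · rcases h.2 m' hm' hne with hlt | ⟨heq, -⟩ <;> omega

theorem isLeadMon_monomial (m : Idx n →₀ ℕ) {c : ℝ} (hc : c ≠ 0) :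
    IsLeadMon (monomial m c) m := by
  refine ⟨by simp [hc], fun m' hm' hne => absurd ?_ hne⟩
  simpa [hc, eq_comm] using hm'

variable [∀ i, NeZero (n i)]

theorem grevlexLt_single_two_botIdx {a : Idx n} (ha : a ≠ botIdx n) :
    grevlexLt (single a 2) (single (botIdx n) 2) := by
  refine Or.inr ⟨by simp [expDeg_eq_degree], a, by simp [ha], fun k hk => ?_⟩
  have hka : k ≠ a := (ne_of_idxLt hk).symm
  have hkb : k ≠ botIdx n := by rintro rfl; exact not_idxLt_botIdx a hk
  simp [hka.symm, hkb.symm]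

end Grevlex

section Generators

open Finsupp

variable {d : ℕ} {n : Fin d → ℕ}

theorem X_mul_X_eq_monomial (a b : Idx n) :
    (X a * X b : MvPolynomial (Idx n) ℝ) = monomial (single a 1 + single b 1) 1 := by
  rw [X, X, monomial_mul, one_mul]

theorem isLeadMon_X_mul_X (a b : Idx n) : IsLeadMon (X a * X b) (single a 1 + single b 1) :=
  X_mul_X_eq_monomial a b ▸ isLeadMon_monomial _ one_ne_zero

theorem mem_support_X_pow_three_sub_X {a : Idx n} {m : Idx n →₀ ℕ}
    (hm : m ∈ (X a ^ 3 - X a : MvPolynomial (Idx n) ℝ).support) :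
    m = single a 3 ∨ m = single a 1 := by
  simpa [support_X_pow, support_X] using support_sub _ _ _ hm

theorem coeff_X_pow_three_sub_X (a : Idx n) :
    coeff (single a 3) (X a ^ 3 - X a : MvPolynomial (Idx n) ℝ) = 1 := by
  simp [coeff_X_pow, coeff_X, (single_injective a).eq_iff]

theorem isLeadMon_X_pow_three_sub_X (a : Idx n) : IsLeadMon (X a ^ 3 - X a) (single a 3) := by
  refine ⟨MvPolynomial.mem_support_iff.2 (coeff_X_pow_three_sub_X a ▸ one_ne_zero),
    fun m hm hne => ?_⟩
  rcases mem_support_X_pow_three_sub_X hm with rfl | rfl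
  · exact absurd rfl hne
  · left; simp [expDeg_eq_degree]

theorem mem_support_sum_X_sq_sub_one {m : Idx n →₀ ℕ}
    (hm : m ∈ ((∑ a : Idx n, X a ^ 2) - 1 : MvPolynomial (Idx n) ℝ).support) :
    m = 0 ∨ ∃ a, m = single a 2 := by
  rcases Finset.mem_union.1 (support_sub _ _ _ hm) with h | h
  · obtain ⟨a, -, ha⟩ := Finset.mem_biUnion.1 (support_sum h)
    simp only [support_X_pow, Finset.mem_singleton] at ha
    exact Or.inr ⟨a, ha⟩
  · simp only [support_one, Finset.mem_singleton] at h
    exact Or.inl h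

theorem coeff_sum_X_sq_sub_one (a : Idx n) :
    coeff (single a 2) ((∑ b : Idx n, X b ^ 2) - 1 : MvPolynomial (Idx n) ℝ) = 1 := by
  simp [coeff_sum, coeff_X_pow, single_left_inj two_ne_zero, coeff_one,
    eq_comm (a := (0 : Idx n →₀ ℕ))]

variable [∀ i, NeZero (n i)]

theorem isLeadMon_sum_X_sq_sub_one :
    IsLeadMon ((∑ a : Idx n, X a ^ 2) - 1) (single (botIdx n) 2) := by
  refine ⟨MvPolynomial.mem_support_iff.2 (coeff_sum_X_sq_sub_one (botIdx n) ▸ one_ne_zero),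
    fun m hm hne => ?_⟩
  rcases mem_support_sum_X_sq_sub_one hm with rfl | ⟨a, rfl⟩
  · left; simp [expDeg_eq_degree]
  · exact grevlexLt_single_two_botIdx (by rintro rfl; exact hne rfl)

end Generators

section G1

open Finsupp

variable {d : ℕ} {n : Fin d → ℕ} [∀ i, NeZero (n i)]

theorem X_mul_X_mem_G1 {a b : Idx n} (h : idxLt a b) : X a * X b ∈ G1 n :=
  Or.inl (Or.inl ⟨a, b, h, rfl⟩)

theorem sum_X_sq_sub_one_mem_G1 : (∑ a : Idx n, X a ^ 2) - 1 ∈ G1 n :=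
  Or.inl (Or.inr rfl)

theorem X_pow_three_sub_X_mem_G1 {a : Idx n} (h : a ≠ botIdx n) : X a ^ 3 - X a ∈ G1 n :=
  Or.inr ⟨a, idxLt_botIdx_iff.2 h, rfl⟩

theorem span_G1 : Ideal.span (G1 n) = I1 n := by
  apply le_antisymm
  · rw [Ideal.span_le]
    rintro f ((⟨a, b, hab, rfl⟩ | rfl) | ⟨a, -, rfl⟩) <;> apply Ideal.subset_span
    · exact Or.inl (Or.inr ⟨a, b, ne_of_idxLt hab, rfl⟩)
    · exact Or.inr rfl
    · exact Or.inl (Or.inl ⟨a, rfl⟩)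
  · have mem (g) (hg : g ∈ G1 n) : g ∈ Ideal.span (G1 n) := Ideal.subset_span hg
    rw [I1, Ideal.span_le]
    rintro f ((⟨a, rfl⟩ | ⟨a, b, hab, rfl⟩) | rfl)
    · by_cases ha : a = botIdx n
      · subst ha
        rw [X_pow_three_sub_X_eq]
        refine sub_mem (Ideal.mul_mem_left _ _ (mem _ sum_X_sq_sub_one_mem_G1)) ?_
        refine Ideal.sum_mem _ fun b hb => Ideal.mul_mem_right _ _ (mem _ (X_mul_X_mem_G1 ?_))
        exact idxLt_botIdx_iff.2 (Finset.ne_of_mem_erase hb)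
      · exact mem _ (X_pow_three_sub_X_mem_G1 ha)
    · rcases idxLt_or_idxLt_of_ne hab with h | h
      · exact mem _ (X_mul_X_mem_G1 h)
      · rw [mul_comm]
        exact mem _ (X_mul_X_mem_G1 h)
    · exact mem _ sum_X_sq_sub_one_mem_G1

/-- The monomials outside the initial ideal of `I₁` (`k = 0` is the monomial `1`). -/
def IsStandard (m : Idx n →₀ ℕ) : Prop :=
  ∃ c k, m = single c k ∧ k ≤ 2 ∧ (c = botIdx n → k ≤ 1)

theorem IsLeadMon.cases_of_mem_G1 {g : MvPolynomial (Idx n) ℝ} (hg : g ∈ G1 n)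
    {mg : Idx n →₀ ℕ} (h : IsLeadMon g mg) :
    (∃ a b, a ≠ b ∧ mg = single a 1 + single b 1 ∧ g = monomial mg 1) ∨
      (mg = single (botIdx n) 2 ∧ g = (∑ a : Idx n, X a ^ 2) - 1) ∨
      ∃ a, a ≠ botIdx n ∧ mg = single a 3 ∧ g = X a ^ 3 - X a := by
  rcases hg with (⟨a, b, hab, rfl⟩ | rfl) | ⟨a, ha, rfl⟩
  · rw [X_mul_X_eq_monomial] at h ⊢
    obtain rfl := h.unique (isLeadMon_monomial _ one_ne_zero)
    exact Or.inl ⟨a, b, ne_of_idxLt hab, rfl, rfl⟩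
  · exact Or.inr (Or.inl ⟨h.unique isLeadMon_sum_X_sq_sub_one, rfl⟩)
  · exact Or.inr (Or.inr
      ⟨a, idxLt_botIdx_iff.1 ha, h.unique (isLeadMon_X_pow_three_sub_X a), rfl⟩)

theorem IsLeadMon.coeff_eq_one_of_mem_G1 {g : MvPolynomial (Idx n) ℝ} (hg : g ∈ G1 n)
    {mg : Idx n →₀ ℕ} (h : IsLeadMon g mg) : coeff mg g = 1 := by
  rcases h.cases_of_mem_G1 hg with ⟨-, -, -, -, rfl⟩ | ⟨rfl, rfl⟩ | ⟨a, -, rfl, rfl⟩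
  · simp [coeff_monomial]
  · exact coeff_sum_X_sq_sub_one _
  · exact coeff_X_pow_three_sub_X a

theorem IsLeadMon.not_le_of_isStandard {g : MvPolynomial (Idx n) ℝ} (hg : g ∈ G1 n)
    {mg m : Idx n →₀ ℕ} (h : IsLeadMon g mg) (hm : IsStandard m) : ¬ mg ≤ m := by
  obtain ⟨c, k, rfl, hk, hkc⟩ := hm
  rcases h.cases_of_mem_G1 hg with ⟨a, b, hab, rfl, -⟩ | ⟨rfl, -⟩ | ⟨a, -, rfl, -⟩
  · exact not_single_add_single_le_single hab c k
  · rw [single_le_iff, single_apply]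
    split_ifs with hc
    · have := hkc hc; omega
    · omega
  · rw [single_le_iff]
    have := le_degree a (single c k)
    rw [degree_single] at this
    omega

theorem IsLeadMon.eq_of_le_of_mem_G1 {g g' : MvPolynomial (Idx n) ℝ} (hg : g ∈ G1 n)
    (hg' : g' ∈ G1 n) {mg mg' : Idx n →₀ ℕ} (h : IsLeadMon g mg) (h' : IsLeadMon g' mg')
    (hle : mg' ≤ mg) : g' = g := by
  have hdeg := degree_mono hle
  rcases h'.cases_of_mem_G1 hg' with ⟨a', b', hab', rfl, rfl⟩ | ⟨rfl, rfl⟩ | ⟨a', ha', rfl, rfl⟩ <;>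
    rcases h.cases_of_mem_G1 hg with ⟨a, b, hab, rfl, rfl⟩ | ⟨rfl, rfl⟩ | ⟨a, ha, rfl, rfl⟩ <;>
    simp only [map_add, degree_single, single_le_iff] at hdeg hle
  -- cases `(g', g)`, each of `g', g` running through `x_a x_b`, `Σ_a x_a² - 1`, `x_a³ - x_a`
  · rw [eq_of_le_of_degree_le hle (by simp)]
  · exact absurd hle (not_single_add_single_le_single hab' _ _)
  · exact absurd hle (not_single_add_single_le_single hab' _ _)
  · have := single_add_single_apply_le_one hab (botIdx n); omega
  · rfl
  · exact absurd (single_apply_ne_zero.1 (by omega : single a 3 (botIdx n) ≠ 0)).1.symm ha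
  · omega
  · omega
  · obtain ⟨rfl, -⟩ := single_apply_ne_zero.1 (by omega : single a 3 a' ≠ 0)
    rfl

theorem isLeadMon_or_isStandard_of_mem_support {g : MvPolynomial (Idx n) ℝ} (hg : g ∈ G1 n)
    {m : Idx n →₀ ℕ} (hm : m ∈ g.support) : IsLeadMon g m ∨ IsStandard m := by
  rcases hg with (⟨a, b, -, rfl⟩ | rfl) | ⟨a, -, rfl⟩
  · rw [X_mul_X_eq_monomial, support_monomial, if_neg one_ne_zero, Finset.mem_singleton] at hm
    exact Or.inl (hm ▸ isLeadMon_X_mul_X a b)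
  · rcases mem_support_sum_X_sq_sub_one hm with rfl | ⟨c, rfl⟩
    · exact Or.inr ⟨botIdx n, 0, (single_zero _).symm, by omega, fun _ => by omega⟩
    · by_cases hc : c = botIdx n
      · exact Or.inl (hc ▸ isLeadMon_sum_X_sq_sub_one)
      · exact Or.inr ⟨c, 2, rfl, le_rfl, fun h => absurd h hc⟩
  · rcases mem_support_X_pow_three_sub_X hm with rfl | rfl
    · exact Or.inl (isLeadMon_X_pow_three_sub_X a)
    · exact Or.inr ⟨a, 1, rfl, by omega, fun _ => le_rfl⟩

theorem isStandard_or_exists_isLeadMon_le (m : Idx n →₀ ℕ) :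
    IsStandard m ∨ ∃ g ∈ G1 n, ∃ mg, IsLeadMon g mg ∧ mg ≤ m := by
  by_cases hcard : m.support.card ≤ 1
  · have : Nonempty (Idx n) := ⟨botIdx n⟩
    obtain ⟨c, k, rfl⟩ := card_support_le_one'.1 hcard
    by_cases hc : c = botIdx n
    · subst hc
      by_cases hk : k ≤ 1
      · exact Or.inl ⟨_, k, rfl, by omega, fun _ => hk⟩
      · exact Or.inr ⟨_, sum_X_sq_sub_one_mem_G1, _, isLeadMon_sum_X_sq_sub_one,
          single_le_single.2 (by omega)⟩
    · by_cases hk : k ≤ 2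
      · exact Or.inl ⟨c, k, rfl, hk, fun h => absurd h hc⟩
      · exact Or.inr ⟨_, X_pow_three_sub_X_mem_G1 hc, _, isLeadMon_X_pow_three_sub_X c,
          single_le_single.2 (by omega)⟩
  · obtain ⟨a, ha, b, hb, hab⟩ := Finset.one_lt_card.1 (by omega : 1 < m.support.card)
    have hle := single_add_single_le hab (Finsupp.mem_support_iff.1 ha)
      (Finsupp.mem_support_iff.1 hb)
    right
    rcases idxLt_or_idxLt_of_ne hab with h | h
    · exact ⟨_, X_mul_X_mem_G1 h, _, isLeadMon_X_mul_X a b, hle⟩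
    · exact ⟨_, X_mul_X_mem_G1 h, _, isLeadMon_X_mul_X b a, add_comm (single a 1) _ ▸ hle⟩

end G1

section Variety

open Finsupp

variable {d : ℕ} {n : Fin d → ℕ}

theorem eval_piSingle_eq_zero_of_mem_I1 {f : MvPolynomial (Idx n) ℝ} (hf : f ∈ I1 n)
    (a : Idx n) {ε : ℝ} (hε : ε ^ 2 = 1) : eval (Pi.single a ε) f = 0 := by
  suffices I1 n ≤ RingHom.ker (eval (Pi.single a ε)) from this hf
  rw [I1, Ideal.span_le]
  rintro f ((⟨b, rfl⟩ | ⟨b, c, hbc, rfl⟩) | rfl) <;>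
    simp only [SetLike.mem_coe, RingHom.mem_ker, map_sub, map_mul, map_pow, map_sum, map_one,
      eval_X]
  · rcases eq_or_ne b a with rfl | hba
    · rw [Pi.single_eq_same]
      linear_combination ε * hε
    · simp [hba]
  · rcases eq_or_ne b a with rfl | hba
    · simp [hbc.symm]
    · simp [hba]
  · rw [Finset.sum_eq_single a (fun b _ hba => by simp [hba]) (by simp), Pi.single_eq_same, hε,
      sub_self]

variable [∀ i, NeZero (n i)]

theorem IsStandard.coeff_eq_zero_of_mem_I1 {f : MvPolynomial (Idx n) ℝ} (hf : f ∈ I1 n)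
    (hdeg : f.totalDegree ≤ 2) (hbot : coeff (single (botIdx n) 2) f = 0)
    {m : Idx n →₀ ℕ} (hm : IsStandard m) : coeff m f = 0 := by
  have hsign (a : Idx n) {ε : ℝ} (hε : ε ^ 2 = 1) :
      coeff 0 f + coeff (single a 1) f * ε + coeff (single a 2) f * ε ^ 2 = 0 := by
    rw [← eval_piSingle_of_totalDegree_le_two hdeg]
    exact eval_piSingle_eq_zero_of_mem_I1 hf a hε
  have hplus (a : Idx n) := hsign a (ε := 1) (by norm_num)
  have hminus (a : Idx n) := hsign a (ε := -1) (by norm_num)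
  have h0 : coeff 0 f = 0 := by
    linarith [hplus (botIdx n), hminus (botIdx n)]
  obtain ⟨c, k, rfl, hk, -⟩ := hm
  interval_cases k
  · rwa [single_zero]
  · linarith [hplus c, hminus c]
  · linarith [hplus c, hminus c]

theorem IsLeadMon.not_isStandard_of_mem_I1 {f : MvPolynomial (Idx n) ℝ} (hf : f ∈ I1 n)
    {m : Idx n →₀ ℕ} (h : IsLeadMon f m) : ¬ IsStandard m := by
  rintro ⟨c, k, rfl, hk, hkc⟩
  have hdeg : f.totalDegree ≤ 2 :=
    Finset.sup_le fun m' hm' => (h.expDeg_le hm').trans (by simpa [expDeg_eq_degree] using hk)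
  have hbot : coeff (single (botIdx n) 2) f = 0 := by
    by_contra hne
    have hmem := MvPolynomial.mem_support_iff.2 hne
    obtain rfl : k = 2 := by
      have := h.expDeg_le hmem
      simp only [expDeg_eq_degree, degree_single] at this
      omega
    have hc : c ≠ botIdx n := fun hc => absurd (hkc hc) (by norm_num)
    exact grevlexLt_asymm (grevlexLt_single_two_botIdx hc)
      (h.2 _ hmem (by simpa [single_left_inj two_ne_zero] using hc.symm))
  exact MvPolynomial.mem_support_iff.1 h.1
    (IsStandard.coeff_eq_zero_of_mem_I1 hf hdeg hbot ⟨c, k, rfl, hk, hkc⟩)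

end Variety

/-- `𝒢₁` is the reduced Gröbner basis of `I₁` w.r.t. grevlex. -/
theorem G1_isReducedGroebnerBasis :
    IsReducedGroebnerBasis (G1 n) (I1 n) := by
  refine ⟨⟨span_G1, fun f hf _ m hm => ?_⟩, fun g hg => ⟨fun m hm => ?_, ?_⟩⟩
  · exact (isStandard_or_exists_isLeadMon_le m).resolve_left (hm.not_isStandard_of_mem_I1 hf)
  · exact hm.coeff_eq_one_of_mem_G1 hg
  · intro m hm g' hg' hne m' hm' hle
    rcases isLeadMon_or_isStandard_of_mem_support hg hm with hlead | hstd
    · exact hne (hlead.eq_of_le_of_mem_G1 hg hg' hm' hle)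
    · exact hm'.not_le_of_isStandard hg' hstd hle
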